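/- arXiv:2603.25824 — 2 statements merged into one kernel-verified Lean document; each statement's English description precedes it below -/
import Mathlib

section
/- Fix p* ∈ ℝ^{m+1}. For q ∈ ℝ^{(m+1)×M}, let f_q be its coupling polynomial and P_6(q) = Σ_{M∣b}[f_q(X,Y)^3 · f_q(X^{−1},Y^{−1})^3]_{0,b}. Suppose q has every entry strictly between 0 and 1, satisfies Σ_{j=0}^{M−1} q_{i,j} = p*_i for every i ∈ {0,…,m}, and is a local minimum of P_6 on the constraint set { q' ∈ ℝ^{(m+1)×M} : q'_{i,j} ∈ [0,1] for all i,j, and Σ_{j} q'_{i,j} = p*_i for all i }. Then there exist real numbers c_0, …, c_m such that Σ_{M∣b}[f_q(X,Y)^3 · f_q(X^{−1},Y^{−1})^2]_{i, b+j} = c_i for all i ∈ {0,…,m} and all j ∈ {0,…,M−1}; that is, the quantity Σ_{M∣b}[f_q^3 \bar{f}_q^2]_{i,b+j} does not depend on j. -/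
open scoped Classical

/-- The coupling polynomial with exponents scaled by `s`:
`f_q(X^s, Y^s) = ∑_{i=0}^{m} ∑_{j=0}^{M-1} q_{i,j} X^{s·i} Y^{s·j}`,
as an element of the group algebra of `ℤ × ℤ` over `ℝ`. -/
noncomputable def couplingPoly (m M : ℕ) (q : Fin (m + 1) → Fin M → ℝ) (s : ℤ) :
    AddMonoidAlgebra ℝ (ℤ × ℤ) :=
  ∑ i : Fin (m + 1), ∑ j : Fin M,
    AddMonoidAlgebra.single (s * (i : ℤ), s * (j : ℤ)) (q i j)

/-- `P₆(q) = Σ_{M∣b}[f_q(X,Y)³ · f_q(X⁻¹,Y⁻¹)³]_{0,b}`. -/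
noncomputable def P6 (m M : ℕ) (q : Fin (m + 1) → Fin M → ℝ) : ℝ :=
  ∑ᶠ b ∈ {b : ℤ | (M : ℤ) ∣ b},
    (couplingPoly m M q 1 ^ 3 * couplingPoly m M q (-1) ^ 3).coeff (0, b)

/-!
Fix a row `i` and columns `j, j'`, and move mass `t` from `q i j'` to `q i j`. Because `q` lies in
the open box and the row sums do not change, this stays feasible for small `|t|`, so `t = 0` is a
local minimum of `P₆` along the line. Along it, `P₆` is a polynomial in `t`, and its derivative at
`0` is `3 Σ[f² δ f̄³] + 3 Σ[f³ f̄² δ̄]` with `δ = X^i Y^j - X^i Y^{j'}`. The substitution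
`(X, Y) ↦ (X⁻¹, Y⁻¹)` preserves `Σ_{M∣b}[·]_{0,b}` (since `M ∣ b ↔ M ∣ -b`) and exchanges the two
terms. So the derivative is `6 Σ_{M∣b}[f³ f̄² δ̄]_{0,b}`, which is six times the difference between
the quantity at `(i, j)` and at `(i, j')`, and this difference must vanish.
-/

open AddMonoidAlgebra Polynomial

section LinearFunctional

variable {R : Type*} [CommRing R]

theorem Polynomial.coeff_one_linear_pow_mul_linear_pow (a b c d : R) (k l : ℕ) :
    ((C a + C b * X) ^ k * (C c + C d * X) ^ l).coeff 1
      = k • (a ^ (k - 1) * b * c ^ l) + l • (a ^ k * c ^ (l - 1) * d) := by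
  rw [← taylor_zero (_ * _), taylor_coeff_one]
  simp only [derivative_mul, derivative_pow, map_natCast, derivative_add, derivative_C, zero_mul,
    derivative_X, mul_one, zero_add, eval_add, eval_mul, eval_natCast, eval_pow, eval_C, eval_X,
    mul_zero, add_zero, nsmul_eq_mul]
  ring

variable [Algebra ℝ R]

theorem LinearMap.map_eval_algebraMap (T : R →ₗ[ℝ] ℝ) (p : R[X]) (t : ℝ) :
    T (p.eval (algebraMap ℝ R t))
      = ∑ n ∈ Finset.range (p.natDegree + 2), T (p.coeff n) * t ^ n := by
  rw [eval_eq_sum_range' (n := p.natDegree + 2) (by omega), map_sum]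
  refine Finset.sum_congr rfl fun n _ => ?_
  rw [← map_pow, ← Algebra.commutes, ← Algebra.smul_def, map_smul, smul_eq_mul, mul_comm]

theorem LinearMap.hasDerivAt_eval_algebraMap (T : R →ₗ[ℝ] ℝ) (p : R[X]) :
    HasDerivAt (fun t : ℝ => T (p.eval (algebraMap ℝ R t))) (T (p.coeff 1)) 0 := by
  simp only [T.map_eval_algebraMap]
  refine (HasDerivAt.fun_sum fun n _ =>
    (hasDerivAt_pow n 0).const_mul (T (p.coeff n))).congr_deriv ?_
  rw [Finset.sum_eq_single 1 (fun n _ hn => by rcases n with _ | _ | n <;> simp_all) (by simp)]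
  simp

end LinearFunctional

theorem IsLocalMinOn.isLocalMin_add_smul {E β : Type*} [AddCommGroup E] [Module ℝ E]
    [TopologicalSpace E] [ContinuousAdd E] [ContinuousSMul ℝ E] [Preorder β] {f : E → β}
    {s : Set E} {x v : E} (hf : IsLocalMinOn f s x) (hs : ∀ᶠ t in nhds (0 : ℝ), x + t • v ∈ s) :
    IsLocalMin (fun t : ℝ => f (x + t • v)) 0 := by
  have hline : Continuous fun t : ℝ => x + t • v := by fun_prop
  have hx : x + (0 : ℝ) • v = x := by rw [zero_smul, add_zero]
  refine IsMinFilter.comp_tendsto (hx ▸ hf) (tendsto_nhdsWithin_iff.2 ⟨?_, hs⟩)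
  simpa using hline.tendsto 0

theorem eventually_add_smul_mem_rowConstraint {ι κ : Type*} [Fintype ι] [Fintype κ]
    {p : ι → ℝ} {q d : ι → κ → ℝ} (hq0 : ∀ i j, 0 < q i j) (hq1 : ∀ i j, q i j < 1)
    (hrow : ∀ i, ∑ j, q i j = p i) (hd : ∀ i, ∑ j, d i j = 0) :
    ∀ᶠ t in nhds (0 : ℝ), q + t • d ∈
      {q' : ι → κ → ℝ | (∀ i j, q' i j ∈ Set.Icc (0 : ℝ) 1) ∧ ∀ i, ∑ j, q' i j = p i} := by
  have hbox : ∀ᶠ t in nhds (0 : ℝ), ∀ i j, q i j + t * d i j ∈ Set.Ioo (0 : ℝ) 1 :=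
    Filter.eventually_all.2 fun i => Filter.eventually_all.2 fun j =>
      (continuous_const.add (continuous_id.mul continuous_const)).continuousAt.eventually_mem
        (isOpen_Ioo.mem_nhds (by simpa using ⟨hq0 i j, hq1 i j⟩))
  filter_upwards [hbox] with t ht
  refine ⟨fun i j => Set.Ioo_subset_Icc_self (ht i j), fun i => ?_⟩
  simp [Finset.sum_add_distrib, ← Finset.mul_sum, hrow, hd]

theorem AddMonoidAlgebra.finite_support_coeff_mk {k G H : Type*} [Semiring k]
    (r : AddMonoidAlgebra k (G × H)) (a : G) :
    (Function.support fun b => r.coeff (a, b)).Finite :=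
  r.coeff.hasFiniteSupport.preimage (Prod.mk_right_injective a).injOn

noncomputable def AddMonoidAlgebra.invert (k G : Type*) [CommSemiring k] [AddCommGroup G] :
    AddMonoidAlgebra k G ≃ₐ[k] AddMonoidAlgebra k G :=
  domCongr k k (AddEquiv.neg G)

theorem AddMonoidAlgebra.coeff_invert {k G : Type*} [CommSemiring k] [AddCommGroup G]
    (r : AddMonoidAlgebra k G) (g : G) : (invert k G r).coeff g = r.coeff (-g) := by
  simp [invert]

noncomputable def dvdCoeffSum (M : ℕ) : AddMonoidAlgebra ℝ (ℤ × ℤ) →ₗ[ℝ] ℝ where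
  toFun r := ∑ᶠ b ∈ {b : ℤ | (M : ℤ) ∣ b}, r.coeff (0, b)
  map_add' r r' := finsum_mem_add_distrib' ((r.finite_support_coeff_mk 0).inter_of_right _)
    ((r'.finite_support_coeff_mk 0).inter_of_right _)
  map_smul' c _ := (mul_finsum_mem _ c).symm

theorem P6_eq_dvdCoeffSum (m M : ℕ) (q : Fin (m + 1) → Fin M → ℝ) :
    P6 m M q = dvdCoeffSum M (couplingPoly m M q 1 ^ 3 * couplingPoly m M q (-1) ^ 3) := rfl

theorem dvdCoeffSum_mul_single_neg (M : ℕ) (r : AddMonoidAlgebra ℝ (ℤ × ℤ)) (a c : ℤ) :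
    dvdCoeffSum M (r * single (-a, -c) 1)
      = ∑ᶠ b ∈ {b : ℤ | (M : ℤ) ∣ b}, r.coeff (a, b + c) := by
  refine finsum_mem_congr rfl fun b _ => ?_
  rw [coeff_mul_single_apply, mul_one]
  congr 1
  ext <;> simp

theorem dvdCoeffSum_invert (M : ℕ) (r : AddMonoidAlgebra ℝ (ℤ × ℤ)) :
    dvdCoeffSum M (invert ℝ (ℤ × ℤ) r) = dvdCoeffSum M r := by
  refine finsum_mem_eq_of_bijOn Neg.neg ?_ fun b _ => ?_
  · exact ⟨fun b hb => dvd_neg.2 hb, neg_injective.injOn,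
      fun b hb => ⟨-b, dvd_neg.2 hb, neg_neg b⟩⟩
  · simp [coeff_invert]

theorem invert_couplingPoly (m M : ℕ) (q : Fin (m + 1) → Fin M → ℝ) (s : ℤ) :
    invert ℝ (ℤ × ℤ) (couplingPoly m M q s) = couplingPoly m M q (-s) := by
  simp [couplingPoly, invert]

theorem couplingPoly_add_smul (m M : ℕ) (q d : Fin (m + 1) → Fin M → ℝ) (t : ℝ) (s : ℤ) :
    couplingPoly m M (q + t • d) s = couplingPoly m M q s + t • couplingPoly m M d s := by
  simp [couplingPoly, Finset.smul_sum, Finset.sum_add_distrib, single_add]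

theorem couplingPoly_single_sub_single (m M : ℕ) (i : Fin (m + 1)) (j j' : Fin M) (s : ℤ) :
    couplingPoly m M (Pi.single i (Pi.single j 1 - Pi.single j' 1)) s
      = single (s * i, s * j) 1 - single (s * i, s * j') 1 := by
  simp [couplingPoly, Pi.single_apply, ite_apply, apply_ite (single _)]

theorem hasDerivAt_P6_add_smul (m M : ℕ) (q d : Fin (m + 1) → Fin M → ℝ) :
    HasDerivAt (fun t : ℝ => P6 m M (q + t • d))
      (6 * dvdCoeffSum M (couplingPoly m M q 1 ^ 3 * couplingPoly m M q (-1) ^ 2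
        * couplingPoly m M d (-1))) 0 := by
  have hsym : dvdCoeffSum M
      (couplingPoly m M q 1 ^ 2 * couplingPoly m M d 1 * couplingPoly m M q (-1) ^ 3)
      = dvdCoeffSum M (couplingPoly m M q 1 ^ 3 * couplingPoly m M q (-1) ^ 2
        * couplingPoly m M d (-1)) := by
    rw [← dvdCoeffSum_invert]
    simp only [map_mul, map_pow, invert_couplingPoly, neg_neg]
    ring_nf
  have hline : (fun t : ℝ => P6 m M (q + t • d)) = fun t => dvdCoeffSum M
      (((C (couplingPoly m M q 1) + C (couplingPoly m M d 1) * X) ^ 3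
        * (C (couplingPoly m M q (-1)) + C (couplingPoly m M d (-1)) * X) ^ 3).eval
          (algebraMap ℝ _ t)) := by
    funext t
    rw [P6_eq_dvdCoeffSum, couplingPoly_add_smul, couplingPoly_add_smul]
    simp only [eval_mul, eval_pow, eval_add, eval_C, eval_X, Algebra.smul_def]
    ring_nf
  rw [hline]
  refine (LinearMap.hasDerivAt_eval_algebraMap _ _).congr_deriv ?_
  rw [coeff_one_linear_pow_mul_linear_pow]
  simp only [map_add, map_nsmul, hsym]
  ring

/-- **Lemma: KKT condition for the cycle-6 objective.**
If `q` has all entries strictly between `0` and `1`, has row sums `p*ᵢ`, and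
is a local minimum of `P₆` on the constraint set
`{q' : q'_{i,j} ∈ [0,1], Σ_j q'_{i,j} = p*ᵢ}`, then there are reals
`c₀, …, c_m` with `Σ_{M∣b}[f_q³ f̄_q²]_{i,b+j} = cᵢ` for all `i, j`;
i.e. that quantity does not depend on `j`. -/
theorem P6_local_min_KKT (m M : ℕ) (hM : 1 ≤ M)
    (pstar : Fin (m + 1) → ℝ)
    (q : Fin (m + 1) → Fin M → ℝ)
    (hq0 : ∀ i j, 0 < q i j) (hq1 : ∀ i j, q i j < 1)
    (hrow : ∀ i, ∑ j : Fin M, q i j = pstar i)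
    (hmin : IsLocalMinOn (P6 m M)
      {q' : Fin (m + 1) → Fin M → ℝ |
        (∀ i j, q' i j ∈ Set.Icc (0 : ℝ) 1) ∧
        ∀ i, ∑ j : Fin M, q' i j = pstar i} q) :
    ∃ c : Fin (m + 1) → ℝ, ∀ (i : Fin (m + 1)) (j : Fin M),
      (∑ᶠ b ∈ {b : ℤ | (M : ℤ) ∣ b},
        (couplingPoly m M q 1 ^ 3 * couplingPoly m M q (-1) ^ 2).coeff
          ((i : ℤ), b + (j : ℤ))) = c i := by
  set g := couplingPoly m M q 1 ^ 3 * couplingPoly m M q (-1) ^ 2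
  suffices h : ∀ (i : Fin (m + 1)) (j j' : Fin M),
      (∑ᶠ b ∈ {b : ℤ | (M : ℤ) ∣ b}, g.coeff (i, b + j))
        = ∑ᶠ b ∈ {b : ℤ | (M : ℤ) ∣ b}, g.coeff (i, b + j') from
    ⟨_, fun i j => h i j ⟨0, hM⟩⟩
  intro i j j'
  set d : Fin (m + 1) → Fin M → ℝ := Pi.single i (Pi.single j 1 - Pi.single j' 1)
  have hd : ∀ i', ∑ j'', d i' j'' = 0 := fun i' => by
    rcases eq_or_ne i' i with rfl | h <;> simp [d, Finset.sum_sub_distrib, *]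
  have hcrit := (hmin.isLocalMin_add_smul
    (eventually_add_smul_mem_rowConstraint hq0 hq1 hrow hd)).hasDerivAt_eq_zero
    (hasDerivAt_P6_add_smul m M q d)
  rw [couplingPoly_single_sub_single, mul_sub, map_sub] at hcrit
  simp only [neg_one_mul, dvdCoeffSum_mul_single_neg] at hcrit
  linarith
end

section
/- Let k, l ≥ 2 be integers. For q ∈ ℝ^{(m+1)×M}, define P^𝒟_{2k,2l}(q) = Σ_{M∣b_1, M∣b_2} [ f(X_1X_2,Y_1Y_2) f(X_1^{−1}X_2^{−1},Y_1^{−1}Y_2^{−1}) f(X_1,Y_1)^{k−1} f(X_1^{−1},Y_1^{−1})^{k−1} f(X_2,Y_2)^{l−1} f(X_2^{−1},Y_2^{−1})^{l−1} ]_{0,0,b_1,b_2}, where f is built from q. Then P^𝒟_{2k,2l} is differentiable in q, and for every i ∈ {0,…,m}, j ∈ {0,…,M−1}: ∂P^𝒟_{2k,2l}/∂q_{i,j} = 2 Σ_{M∣b_1, M∣b_2} ( [ f(X_1X_2,Y_1Y_2) f(X_1,Y_1)^{k−1} f(X_1^{−1},Y_1^{−1})^{k−1} f(X_2,Y_2)^{l−1}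 f(X_2^{−1},Y_2^{−1})^{l−1} ]_{i,i,b_1+j,b_2+j} + (k−1)[ f(X_1X_2,Y_1Y_2) f(X_1^{−1}X_2^{−1},Y_1^{−1}Y_2^{−1}) f(X_1,Y_1)^{k−1} f(X_1^{−1},Y_1^{−1})^{k−2} f(X_2,Y_2)^{l−1} f(X_2^{−1},Y_2^{−1})^{l−1} ]_{i,0,b_1+j,b_2} + (l−1)[ f(X_1X_2,Y_1Y_2) f(X_1^{−1}X_2^{−1},Y_1^{−1}Y_2^{−1}) f(X_1,Y_1)^{k−1} f(X_1^{−1},Y_1^{−1})^{k−1} f(X_2,Y_2)^{l−1} f(X_2^{−1},Y_2^{−1})^{l−2} ]_{0,i,b_1,b_2+j} ). -/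
open scoped Classical

/-- A monomial-substituted coupling polynomial in the four-variable Laurent
polynomial ring (the group algebra over `ℝ` of `ℤ⁴`):
`couplingPoly4 q s₁ s₂ t₁ t₂ = Σ_{i,j} q_{i,j} X₁^{s₁·i} X₂^{s₂·i} Y₁^{t₁·j} Y₂^{t₂·j}`.
E.g. `couplingPoly4 q 1 1 1 1 = f(X₁X₂, Y₁Y₂)`,
`couplingPoly4 q 1 0 1 0 = f(X₁,Y₁)`, etc. -/
noncomputable def couplingPoly4 (m M : ℕ) (q : Fin (m + 1) → Fin M → ℝ)
    (s₁ s₂ t₁ t₂ : ℤ) : AddMonoidAlgebra ℝ (ℤ × ℤ × ℤ × ℤ) :=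
  ∑ i : Fin (m + 1), ∑ j : Fin M,
    AddMonoidAlgebra.single
      (s₁ * (i : ℤ), s₂ * (i : ℤ), t₁ * (j : ℤ), t₂ * (j : ℤ)) (q i j)

/-- `P^𝒟_{2k,2l}(q) = Σ_{M∣b₁,M∣b₂}[ f(X₁X₂,Y₁Y₂) f(X₁⁻¹X₂⁻¹,Y₁⁻¹Y₂⁻¹)
  f(X₁,Y₁)^{k−1} f(X₁⁻¹,Y₁⁻¹)^{k−1} f(X₂,Y₂)^{l−1} f(X₂⁻¹,Y₂⁻¹)^{l−1} ]_{0,0,b₁,b₂}`. -/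
noncomputable def PDom (m M k l : ℕ) (q : Fin (m + 1) → Fin M → ℝ) : ℝ :=
  ∑ᶠ b ∈ {b : ℤ × ℤ | (M : ℤ) ∣ b.1 ∧ (M : ℤ) ∣ b.2},
    (couplingPoly4 m M q 1 1 1 1 * couplingPoly4 m M q (-1) (-1) (-1) (-1) *
      couplingPoly4 m M q 1 0 1 0 ^ (k - 1) *
      couplingPoly4 m M q (-1) 0 (-1) 0 ^ (k - 1) *
      couplingPoly4 m M q 0 1 0 1 ^ (l - 1) *
      couplingPoly4 m M q 0 (-1) 0 (-1) ^ (l - 1)).coeff (0, 0, b.1, b.2)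

/-!
Replacing every entry `q i j` by an indeterminate `X (i, j)` turns each `f(…)` into a generic
Laurent polynomial with coefficients in `MvPolynomial (Fin (m+1) × Fin M) ℝ`, and extracting the
lattice coefficients commutes with evaluating the indeterminates at `q`. Hence `P^𝒟_{2k,2l}(q)` is
the evaluation at `q` of one multivariate polynomial, so it is analytic, in particular
differentiable. Its partial derivative is computed by applying `∂/∂X (i, j)` coefficientwise, which
is a derivation of the Laurent polynomial ring. By the Leibniz rule it hits one factor at a time,
turning it into a monomial. The inversion `X ↦ X⁻¹` swaps each factor with its conjugate and fixes
the lattice sum, so the six resulting terms pair up into twice the three of the formula.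
-/

open AddMonoidAlgebra

namespace Derivation

variable {R A G : Type*} [CommSemiring R] [CommRing A] [Algebra R A] [AddCommMonoid G]

noncomputable def mapAddMonoidAlgebra (D : Derivation R A A) : Derivation R A[G] A[G] :=
  .mk' { toFun := map D.toLinearMap.toAddMonoidHom
         map_add' := AddMonoidAlgebra.map_add _
         map_smul' r x := by ext g; simp [coeff_map] }
    fun x y => by
      induction x using AddMonoidAlgebra.induction_linear with
      | zero => simp
      | add x x' hx hx' => simp only [add_mul, map_add, hx, hx', add_smul, smul_add]; abel
      | single g r =>
        induction y using AddMonoidAlgebra.induction_linear with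
        | zero => simp
        | add y y' hy hy' => simp only [mul_add, map_add, hy, hy', add_smul, smul_add]; abel
        | single g' r' => simp [single_mul_single, map_single, smul_eq_mul, add_comm g g']

@[simp]
theorem coeff_mapAddMonoidAlgebra (D : Derivation R A A) (x : A[G]) (g : G) :
    (D.mapAddMonoidAlgebra x).coeff g = D (x.coeff g) := by
  simp [mapAddMonoidAlgebra, coeff_map]

theorem mapAddMonoidAlgebra_single (D : Derivation R A A) (g : G) (a : A) :
    D.mapAddMonoidAlgebra (single g a) = single g (D a) := by
  simp [mapAddMonoidAlgebra, map_single]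

theorem mapDomainRingEquiv_mapAddMonoidAlgebra (D : Derivation R A A) (e : G ≃+ G) (x : A[G]) :
    mapDomainRingEquiv A e (D.mapAddMonoidAlgebra x) =
      D.mapAddMonoidAlgebra (mapDomainRingEquiv A e x) := by
  ext; simp

end Derivation

theorem MvPolynomial.hasDerivAt_eval_update {𝕜 σ : Type*} [NontriviallyNormedField 𝕜]
    [DecidableEq σ] (P : MvPolynomial σ 𝕜) (x : σ → 𝕜) (a : σ) (t : 𝕜) :
    HasDerivAt (fun s => eval (Function.update x a s) P)
      (eval (Function.update x a t) (pderiv a P)) t := by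
  induction P using MvPolynomial.induction_on with
  | C r => simpa using hasDerivAt_const t r
  | add P Q hP hQ => simpa using hP.fun_add hQ
  | mul_X P n hP =>
    rcases eq_or_ne n a with rfl | hn
    · simpa [add_comm, mul_comm] using hP.fun_mul (hasDerivAt_id' t)
    · simpa [hn, mul_comm] using hP.mul_const (x n)

section LatticeTrace

variable {R S : Type*} [Semiring R] [Semiring S]

theorem hasFiniteSupport_coeff_zero_zero (x : R[ℤ × ℤ × ℤ × ℤ]) :
    Function.HasFiniteSupport fun b : ℤ × ℤ => x.coeff (0, 0, b.1, b.2) :=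
  x.coeff.hasFiniteSupport.preimage fun b _ b' _ h => by simp_all [Prod.ext_iff]

noncomputable def latticeTrace (M : ℕ) : R[ℤ × ℤ × ℤ × ℤ] →+ R where
  toFun x := ∑ᶠ b ∈ {b : ℤ × ℤ | (M : ℤ) ∣ b.1 ∧ (M : ℤ) ∣ b.2}, x.coeff (0, 0, b.1, b.2)
  map_zero' := by simp
  map_add' x y := finsum_mem_add_distrib' ((hasFiniteSupport_coeff_zero_zero x).inter_of_right _)
    ((hasFiniteSupport_coeff_zero_zero y).inter_of_right _)

variable (M : ℕ)

theorem latticeTrace_map {F : Type*} [FunLike F R S] [AddMonoidHomClass F R S] (f : F)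
    (x : R[ℤ × ℤ × ℤ × ℤ]) : latticeTrace M (map (f : R →+ S) x) = f (latticeTrace M x) :=
  ((f : R →+ S).map_finsum_mem' ((hasFiniteSupport_coeff_zero_zero x).inter_of_right _)).symm

theorem latticeTrace_mapRingHom (f : R →+* S) (x : R[ℤ × ℤ × ℤ × ℤ]) :
    latticeTrace M (mapRingHom _ f x) = f (latticeTrace M x) :=
  latticeTrace_map M f x

theorem latticeTrace_mapAddMonoidAlgebra {K A : Type*} [CommSemiring K] [CommRing A] [Algebra K A]
    (D : Derivation K A A) (x : A[ℤ × ℤ × ℤ × ℤ]) :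
    latticeTrace M (D.mapAddMonoidAlgebra x) = D (latticeTrace M x) :=
  latticeTrace_map M D x

theorem latticeTrace_mapDomain_neg (x : R[ℤ × ℤ × ℤ × ℤ]) :
    latticeTrace M (mapDomainRingEquiv R (AddEquiv.neg (ℤ × ℤ × ℤ × ℤ)) x) = latticeTrace M x := by
  refine finsum_mem_eq_of_bijOn (Equiv.neg (ℤ × ℤ)) ((Equiv.neg _).bijOn fun b => ?_) fun b _ => ?_
  · simp
  · simp only [Equiv.neg_apply, coeff_mapDomainRingEquiv, Finsupp.equivMapDomain_apply]
    rfl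

theorem coeff_single_one_mul_zero_zero (x : R[ℤ × ℤ × ℤ × ℤ]) (a₁ a₂ a₃ a₄ b₁ b₂ : ℤ) :
    (single (a₁, a₂, a₃, a₄) 1 * x).coeff (0, 0, b₁, b₂) = x.coeff (-a₁, -a₂, b₁ - a₃, b₂ - a₄) := by
  rw [coeff_single_mul_apply, one_mul]
  congr 1
  simp [sub_eq_neg_add]

end LatticeTrace

section DominantProduct

variable {R A B : Type*} [CommSemiring R] [CommSemiring A] [CommSemiring B]

def dominantProduct (c : ℤ → ℤ → ℤ → ℤ → A) (k l : ℕ) : A :=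
  c 1 1 1 1 * c (-1) (-1) (-1) (-1) * c 1 0 1 0 ^ (k - 1) * c (-1) 0 (-1) 0 ^ (k - 1) *
    c 0 1 0 1 ^ (l - 1) * c 0 (-1) 0 (-1) ^ (l - 1)

def dominantHalfDeriv (c d : ℤ → ℤ → ℤ → ℤ → A) (k l : ℕ) : A :=
  d (-1) (-1) (-1) (-1) * (c 1 1 1 1 * c 1 0 1 0 ^ (k - 1) * c (-1) 0 (-1) 0 ^ (k - 1) *
      c 0 1 0 1 ^ (l - 1) * c 0 (-1) 0 (-1) ^ (l - 1)) +
    (k - 1) • (d (-1) 0 (-1) 0 * (c 1 1 1 1 * c (-1) (-1) (-1) (-1) * c 1 0 1 0 ^ (k - 1) *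
      c (-1) 0 (-1) 0 ^ (k - 2) * c 0 1 0 1 ^ (l - 1) * c 0 (-1) 0 (-1) ^ (l - 1))) +
    (l - 1) • (d 0 (-1) 0 (-1) * (c 1 1 1 1 * c (-1) (-1) (-1) (-1) * c 1 0 1 0 ^ (k - 1) *
      c (-1) 0 (-1) 0 ^ (k - 1) * c 0 1 0 1 ^ (l - 1) * c 0 (-1) 0 (-1) ^ (l - 2)))

theorem map_dominantProduct (φ : A →+* B) (c : ℤ → ℤ → ℤ → ℤ → A) (k l : ℕ) :
    φ (dominantProduct c k l) = dominantProduct (fun s₁ s₂ t₁ t₂ => φ (c s₁ s₂ t₁ t₂)) k l := by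
  simp [dominantProduct]

theorem map_dominantHalfDeriv (φ : A →+* B) (c d : ℤ → ℤ → ℤ → ℤ → A) (k l : ℕ) :
    φ (dominantHalfDeriv c d k l) = dominantHalfDeriv (fun s₁ s₂ t₁ t₂ => φ (c s₁ s₂ t₁ t₂))
      (fun s₁ s₂ t₁ t₂ => φ (d s₁ s₂ t₁ t₂)) k l := by
  simp [dominantHalfDeriv]

theorem Derivation.apply_dominantProduct {A : Type*} [CommRing A] [Algebra R A]
    (D : Derivation R A A) (N : A ≃+* A) (c : ℤ → ℤ → ℤ → ℤ → A)
    (hc : ∀ s₁ s₂ t₁ t₂, N (c s₁ s₂ t₁ t₂) = c (-s₁) (-s₂) (-t₁) (-t₂))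
    (hD : ∀ a, N (D a) = D (N a)) (k l : ℕ) :
    D (dominantProduct c k l) =
      dominantHalfDeriv c (fun s₁ s₂ t₁ t₂ => D (c s₁ s₂ t₁ t₂)) k l +
        N (dominantHalfDeriv c (fun s₁ s₂ t₁ t₂ => D (c s₁ s₂ t₁ t₂)) k l) := by
  simp only [dominantProduct, dominantHalfDeriv, Derivation.leibniz, Derivation.leibniz_pow,
    map_add, map_mul, map_nsmul, map_pow, hc, hD, neg_neg, neg_zero, smul_eq_mul, Nat.sub_sub]
  ring

end DominantProduct

section GenericCoupling

open MvPolynomial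

variable (m M : ℕ)

noncomputable def genericCouplingPoly (s₁ s₂ t₁ t₂ : ℤ) :
    (MvPolynomial (Fin (m + 1) × Fin M) ℝ)[ℤ × ℤ × ℤ × ℤ] :=
  ∑ i : Fin (m + 1), ∑ j : Fin M,
    single (s₁ * (i : ℤ), s₂ * (i : ℤ), t₁ * (j : ℤ), t₂ * (j : ℤ)) (X (i, j))

theorem map_eval_genericCouplingPoly (q : Fin (m + 1) → Fin M → ℝ) (s₁ s₂ t₁ t₂ : ℤ) :
    mapRingHom _ (eval (Function.uncurry q)) (genericCouplingPoly m M s₁ s₂ t₁ t₂) =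
      couplingPoly4 m M q s₁ s₂ t₁ t₂ := by
  simp [genericCouplingPoly, couplingPoly4, mapRingHom_single]

theorem mapDomain_neg_genericCouplingPoly (s₁ s₂ t₁ t₂ : ℤ) :
    mapDomainRingEquiv _ (AddEquiv.neg _) (genericCouplingPoly m M s₁ s₂ t₁ t₂) =
      genericCouplingPoly m M (-s₁) (-s₂) (-t₁) (-t₂) := by
  simp [genericCouplingPoly]

theorem pderiv_genericCouplingPoly (i : Fin (m + 1)) (j : Fin M) (s₁ s₂ t₁ t₂ : ℤ) :
    (pderiv (i, j)).mapAddMonoidAlgebra (genericCouplingPoly m M s₁ s₂ t₁ t₂) =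
      single (s₁ * (i : ℤ), s₂ * (i : ℤ), t₁ * (j : ℤ), t₂ * (j : ℤ)) 1 := by
  simp only [genericCouplingPoly, map_sum, Derivation.mapAddMonoidAlgebra_single, pderiv_X]
  rw [Finset.sum_eq_single i, Finset.sum_eq_single j] <;> simp_all

end GenericCoupling

section PDom

open MvPolynomial

variable (m M k l : ℕ)

noncomputable def PDomPoly : MvPolynomial (Fin (m + 1) × Fin M) ℝ :=
  latticeTrace M (dominantProduct (genericCouplingPoly m M) k l)

theorem PDom_eq_eval (q : Fin (m + 1) → Fin M → ℝ) :
    PDom m M k l q = eval (Function.uncurry q) (PDomPoly m M k l) := by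
  rw [PDomPoly, ← latticeTrace_mapRingHom, map_dominantProduct]
  simp only [map_eval_genericCouplingPoly]
  rfl

theorem eval_pderiv_PDomPoly (q : Fin (m + 1) → Fin M → ℝ) (i : Fin (m + 1)) (j : Fin M) :
    eval (Function.uncurry q) (pderiv (i, j) (PDomPoly m M k l)) =
      2 * latticeTrace M (dominantHalfDeriv (couplingPoly4 m M q)
        (fun s₁ s₂ t₁ t₂ => single (s₁ * (i : ℤ), s₂ * (i : ℤ), t₁ * (j : ℤ), t₂ * (j : ℤ)) 1)
        k l) := by
  rw [PDomPoly, ← latticeTrace_mapAddMonoidAlgebra,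
    Derivation.apply_dominantProduct _ (mapDomainRingEquiv _ (AddEquiv.neg _)) _
      (mapDomain_neg_genericCouplingPoly m M)
      fun x => (pderiv (i, j)).mapDomainRingEquiv_mapAddMonoidAlgebra _ x,
    map_add, latticeTrace_mapDomain_neg, ← two_mul, map_mul, map_ofNat,
    ← latticeTrace_mapRingHom, map_dominantHalfDeriv]
  simp only [map_eval_genericCouplingPoly, pderiv_genericCouplingPoly, mapRingHom_single, map_one]

theorem differentiable_PDom : Differentiable ℝ (PDom m M k l) := by
  have h := AnalyticOnNhd.eval_linearMap' (fun a : Fin (m + 1) × Fin M =>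
    (LinearMap.proj a.2 : (Fin M → ℝ) →ₗ[ℝ] ℝ) ∘ₗ
      (LinearMap.proj a.1 : (Fin (m + 1) → Fin M → ℝ) →ₗ[ℝ] Fin M → ℝ)) (PDomPoly m M k l)
  rw [funext (PDom_eq_eval m M k l)]
  exact differentiableOn_univ.mp h.differentiableOn

theorem hasDerivAt_PDom_update (q : Fin (m + 1) → Fin M → ℝ) (i : Fin (m + 1)) (j : Fin M) :
    HasDerivAt (fun t => PDom m M k l (Function.update q i (Function.update (q i) j t)))
      (eval (Function.uncurry q) (pderiv (i, j) (PDomPoly m M k l))) (q i j) := by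
  have h := MvPolynomial.hasDerivAt_eval_update (PDomPoly m M k l) (Function.uncurry q) (i, j)
    (Function.uncurry q (i, j))
  rw [Function.update_eq_self] at h
  have hfun : (fun t => PDom m M k l (Function.update q i (Function.update (q i) j t))) =
      fun t => eval (Function.update (Function.uncurry q) (i, j) t) (PDomPoly m M k l) :=
    funext fun t => by rw [← Function.uncurry_update_update, PDom_eq_eval]
  rwa [hfun]

end PDom

theorem PDom_differentiable_and_partial_deriv_general (m M : ℕ)
    (k l : ℕ) (hk : 2 ≤ k) (hl : 2 ≤ l) :
    Differentiable ℝ (PDom m M k l) ∧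
    ∀ (q : Fin (m + 1) → Fin M → ℝ) (i : Fin (m + 1)) (j : Fin M),
      HasDerivAt
        (fun t : ℝ => PDom m M k l (Function.update q i (Function.update (q i) j t)))
        (2 * ∑ᶠ b ∈ {b : ℤ × ℤ | (M : ℤ) ∣ b.1 ∧ (M : ℤ) ∣ b.2},
          ((couplingPoly4 m M q 1 1 1 1 *
              couplingPoly4 m M q 1 0 1 0 ^ (k - 1) *
              couplingPoly4 m M q (-1) 0 (-1) 0 ^ (k - 1) *
              couplingPoly4 m M q 0 1 0 1 ^ (l - 1) *
              couplingPoly4 m M q 0 (-1) 0 (-1) ^ (l - 1)).coeff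
              ((i : ℤ), (i : ℤ), b.1 + (j : ℤ), b.2 + (j : ℤ)) +
           ((k : ℝ) - 1) *
            (couplingPoly4 m M q 1 1 1 1 * couplingPoly4 m M q (-1) (-1) (-1) (-1) *
              couplingPoly4 m M q 1 0 1 0 ^ (k - 1) *
              couplingPoly4 m M q (-1) 0 (-1) 0 ^ (k - 2) *
              couplingPoly4 m M q 0 1 0 1 ^ (l - 1) *
              couplingPoly4 m M q 0 (-1) 0 (-1) ^ (l - 1)).coeff
              ((i : ℤ), 0, b.1 + (j : ℤ), b.2) +
           ((l : ℝ) - 1) *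
            (couplingPoly4 m M q 1 1 1 1 * couplingPoly4 m M q (-1) (-1) (-1) (-1) *
              couplingPoly4 m M q 1 0 1 0 ^ (k - 1) *
              couplingPoly4 m M q (-1) 0 (-1) 0 ^ (k - 1) *
              couplingPoly4 m M q 0 1 0 1 ^ (l - 1) *
              couplingPoly4 m M q 0 (-1) 0 (-1) ^ (l - 2)).coeff
              (0, (i : ℤ), b.1, b.2 + (j : ℤ))))
        (q i j) := by
  refine ⟨differentiable_PDom m M k l, fun q i j =>
    (hasDerivAt_PDom_update m M k l q i j).congr_deriv ?_⟩
  rw [eval_pderiv_PDomPoly]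
  refine congrArg _ (finsum_mem_congr rfl fun b _ => ?_)
  have hk1 : ((k - 1 : ℕ) : ℝ) = k - 1 := by rw [Nat.cast_sub (by omega), Nat.cast_one]
  have hl1 : ((l - 1 : ℕ) : ℝ) = l - 1 := by rw [Nat.cast_sub (by omega), Nat.cast_one]
  simp only [dominantHalfDeriv, coeff_add, Finsupp.add_apply, coeff_smul_apply]
  simp only [coeff_single_one_mul_zero_zero, nsmul_eq_mul, hk1, hl1, neg_mul, one_mul, zero_mul,
    neg_neg, neg_zero, sub_neg_eq_add, sub_zero]

/-- `P^𝒟_{2k,2l}` is differentiable in `q`, and its partial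
derivative with respect to `q_{i,j}` is given by the displayed formula
(gradient of the characteristic polynomial of the dominant object pattern
classes of the `2k`-`2l` configuration). -/
theorem PDom_differentiable_and_partial_deriv (m M : ℕ) (hM : 1 ≤ M)
    (k l : ℕ) (hk : 2 ≤ k) (hl : 2 ≤ l) :
    Differentiable ℝ (PDom m M k l) ∧
    ∀ (q : Fin (m + 1) → Fin M → ℝ) (i : Fin (m + 1)) (j : Fin M),
      HasDerivAt
        (fun t : ℝ => PDom m M k l (Function.update q i (Function.update (q i) j t)))
        (2 * ∑ᶠ b ∈ {b : ℤ × ℤ | (M : ℤ) ∣ b.1 ∧ (M : ℤ) ∣ b.2},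
          ((couplingPoly4 m M q 1 1 1 1 *
              couplingPoly4 m M q 1 0 1 0 ^ (k - 1) *
              couplingPoly4 m M q (-1) 0 (-1) 0 ^ (k - 1) *
              couplingPoly4 m M q 0 1 0 1 ^ (l - 1) *
              couplingPoly4 m M q 0 (-1) 0 (-1) ^ (l - 1)).coeff
              ((i : ℤ), (i : ℤ), b.1 + (j : ℤ), b.2 + (j : ℤ)) +
           ((k : ℝ) - 1) *
            (couplingPoly4 m M q 1 1 1 1 * couplingPoly4 m M q (-1) (-1) (-1) (-1) *
              couplingPoly4 m M q 1 0 1 0 ^ (k - 1) *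
              couplingPoly4 m M q (-1) 0 (-1) 0 ^ (k - 2) *
              couplingPoly4 m M q 0 1 0 1 ^ (l - 1) *
              couplingPoly4 m M q 0 (-1) 0 (-1) ^ (l - 1)).coeff
              ((i : ℤ), 0, b.1 + (j : ℤ), b.2) +
           ((l : ℝ) - 1) *
            (couplingPoly4 m M q 1 1 1 1 * couplingPoly4 m M q (-1) (-1) (-1) (-1) *
              couplingPoly4 m M q 1 0 1 0 ^ (k - 1) *
              couplingPoly4 m M q (-1) 0 (-1) 0 ^ (k - 1) *
              couplingPoly4 m M q 0 1 0 1 ^ (l - 1) *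
              couplingPoly4 m M q 0 (-1) 0 (-1) ^ (l - 2)).coeff
              (0, (i : ℤ), b.1, b.2 + (j : ℤ))))
        (q i j) :=
  PDom_differentiable_and_partial_deriv_general m M k l hk hl
end
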